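/- For 0 < p < 1 and integer k ≥ 1, the function ν_SM(k,p) = ((2-p)/(1-p)) · (k-1)! · ∏_{i=1}^{k} (i + (2-p)/(1-p))^{-1} defines a probability mass function on the positive integers, i.e., ∑_{k=1}^∞ ν_SM(k,p) = 1. -/

import Mathlib

open Finset

/-- The limiting degree distribution of the Superstar Model:
`ν_SM(k,p) = ((2-p)/(1-p)) · (k-1)! · ∏_{i=1}^k (i + (2-p)/(1-p))⁻¹` for `k ≥ 1`. -/
noncomputable def nuSM (p : ℝ) (k : ℕ) : ℝ :=
  (2 - p) / (1 - p) * (Nat.factorial (k - 1)) *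
    ∏ i ∈ Finset.Icc 1 k, ((i : ℝ) + (2 - p) / (1 - p))⁻¹

/-! The point masses telescope: with `c = (2-p)/(1-p)` and `u k = k! ∏_{i=1}^k (i + c)⁻¹`,
the ratio `u (k+1) / u k = (k+1)/(k+1+c)` gives `ν_SM(k+1,p) = u k - u (k+1)`. So the partial
sums are `1 - u n`, and `u n ≤ 1/(n+1)` because `c ≥ 1`. -/

open Filter Topology

theorem hasSum_sub_succ_of_antitone {f : ℕ → ℝ} {l : ℝ} (hf : Antitone f)
    (hlim : Tendsto f atTop (𝓝 l)) : HasSum (fun n => f n - f (n + 1)) (f 0 - l) := by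
  refine (hasSum_iff_tendsto_nat_of_nonneg (fun n => sub_nonneg.2 (hf n.le_succ)) _).2 ?_
  simp only [sum_range_sub']
  exact hlim.const_sub (f 0)

namespace SuperstarModel

/-- With `c = (2-p)/(1-p)`, `tail c k` is the `ν_SM(·,p)`-mass of `{k+1, k+2, …}`. -/
noncomputable def tail (c : ℝ) (k : ℕ) : ℝ :=
  k.factorial * ∏ i ∈ Icc 1 k, ((i : ℝ) + c)⁻¹

variable {c : ℝ}

theorem prod_Icc_succ (c : ℝ) (k : ℕ) :
    ∏ i ∈ Icc 1 (k + 1), ((i : ℝ) + c)⁻¹ = (∏ i ∈ Icc 1 k, ((i : ℝ) + c)⁻¹) * (k + 1 + c)⁻¹ := by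
  rw [prod_Icc_succ_top (by omega)]
  push_cast
  rfl

@[simp]
theorem tail_zero (c : ℝ) : tail c 0 = 1 := by
  simp [tail]

theorem tail_succ (c : ℝ) (k : ℕ) : tail c (k + 1) = tail c k * ((k + 1) / (k + 1 + c)) := by
  simp only [tail, prod_Icc_succ, Nat.factorial_succ]
  push_cast
  ring

theorem tail_nonneg (hc : 0 ≤ c) (k : ℕ) : 0 ≤ tail c k :=
  mul_nonneg (by positivity) (prod_nonneg fun i _ => by positivity)

theorem tail_antitone (hc : 0 ≤ c) : Antitone (tail c) := by
  refine antitone_nat_of_succ_le fun k => ?_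
  rw [tail_succ]
  exact mul_le_of_le_one_right (tail_nonneg hc k) ((div_le_one (by positivity)).2 (by linarith))

theorem tail_le_inv (hc : 1 ≤ c) (n : ℕ) : tail c n ≤ ((n : ℝ) + 1)⁻¹ := by
  induction n with
  | zero => simp
  | succ n ih =>
    calc tail c (n + 1) = tail c n * ((n + 1) / (n + 1 + c)) := tail_succ c n
      _ ≤ ((n : ℝ) + 1)⁻¹ * ((n + 1) / (n + 1 + c)) := by gcongr
      _ = (n + 1 + c)⁻¹ := by field_simp
      _ ≤ ((n + 1 : ℕ) + 1 : ℝ)⁻¹ := by gcongr; push_cast; linarith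

theorem tendsto_tail_zero (hc : 1 ≤ c) : Tendsto (tail c) atTop (𝓝 0) := by
  refine squeeze_zero (tail_nonneg (by linarith)) (tail_le_inv hc) ?_
  simpa only [one_div] using tendsto_one_div_add_atTop_nhds_zero_nat (𝕜 := ℝ)

theorem tail_sub_tail_succ (hc : 0 ≤ c) (k : ℕ) :
    tail c k - tail c (k + 1) = c * k.factorial * ∏ i ∈ Icc 1 (k + 1), ((i : ℝ) + c)⁻¹ := by
  have hk : (k : ℝ) + 1 + c ≠ 0 := by positivity
  rw [tail_succ, prod_Icc_succ, tail]
  field_simp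
  ring

end SuperstarModel

theorem nuSM_hasSum_one_general (p : ℝ) (hp1 : p < 1) :
    HasSum (fun k : ℕ => nuSM p (k + 1)) 1 := by
  set c := (2 - p) / (1 - p)
  have hc : 1 ≤ c := by rw [le_div_iff₀ (by linarith)]; linarith
  have h := hasSum_sub_succ_of_antitone (SuperstarModel.tail_antitone (zero_le_one.trans hc))
    (SuperstarModel.tendsto_tail_zero hc)
  simpa only [SuperstarModel.tail_sub_tail_succ (zero_le_one.trans hc), SuperstarModel.tail_zero,
    sub_zero, nuSM, Nat.add_sub_cancel] using h

/-- `ν_SM(·,p)` is a probability mass function on the positive integers: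
`∑_{k=1}^∞ ν_SM(k,p) = 1`. -/
theorem nuSM_hasSum_one (p : ℝ) (hp0 : 0 < p) (hp1 : p < 1) :
    HasSum (fun k : ℕ => nuSM p (k + 1)) 1 :=
  nuSM_hasSum_one_general p hp1
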